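/- Let M : [0,τ] → Sym_n(ℝ) be a differentiable function taking values in the n×n real symmetric matrices such that ∂_t M(t) ⪰ M(t)² (in the positive semidefinite order) for all t ∈ [0,τ], and let λ_1, …, λ_n be the eigenvalues of M(0). Then for every t ∈ [0,τ] with 1 − λ_i t > 0 for all i, one has Tr[M(t)] ≥ Σ_{i=1}^{n} λ_i / (1 − λ_i t). -/

import Mathlib

/-!
Fix an orthonormal eigenbasis `vᵢ` of `M 0`, with `M 0 vᵢ = λᵢ vᵢ`. The trace of `M t` is the sum of
the quadratic forms `fᵢ t = ⟪vᵢ, M t vᵢ⟫`, with `fᵢ 0 = λᵢ`, and by Cauchy–Schwarz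
`fᵢ² ≤ ‖M vᵢ‖² = ⟪vᵢ, M² vᵢ⟫ ≤ ⟪vᵢ, M' vᵢ⟫ = fᵢ'`. So each `fᵢ` is a supersolution of the scalar
Riccati equation `y' = y²`, and lies above its solution `λᵢ / (1 - λᵢ t)`.
-/

open Matrix Set

/-- With `p s = 1 - c (s - a)`, the function `f p² - c p` has derivative
`f' p² - 2 c f p + c² ≥ (f p - c)² ≥ 0`, so it stays above its value `f a - c ≥ 0` at `a`. -/
theorem riccati_comparison {f f' : ℝ → ℝ} {a b c : ℝ} (hab : a ≤ b)
    (hf : ∀ s ∈ Icc a b, HasDerivAt f (f' s) s) (hf' : ∀ s ∈ Icc a b, f s ^ 2 ≤ f' s)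
    (hc : c ≤ f a) (hpos : 0 < 1 - c * (b - a)) :
    c / (1 - c * (b - a)) ≤ f b := by
  set p : ℝ → ℝ := fun s => 1 - c * (s - a)
  have hp : ∀ s, HasDerivAt p (-c) s := fun s => by
    simpa using (((hasDerivAt_id s).sub_const a).const_mul c).const_sub 1
  have hmono : MonotoneOn (fun s => f s * p s ^ 2 - c * p s) (Icc a b) := by
    refine monotoneOn_of_hasDerivWithinAt_nonneg (convex_Icc a b)
      (f' := fun s => f' s * p s ^ 2 - 2 * c * f s * p s + c ^ 2) ?_ (fun s hs => ?_)
      (fun s hs => ?_)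
    · exact fun s hs => ((hf s hs).continuousAt.mul ((hp s).continuousAt.pow 2)).sub
        ((hp s).continuousAt.const_mul c) |>.continuousWithinAt
    · have hd := ((hf s (interior_subset hs)).fun_mul ((hp s).fun_pow 2)).sub ((hp s).const_mul c)
      exact (hd.congr_deriv (by push_cast; ring)).hasDerivWithinAt
    · have hfs := hf' s (interior_subset hs)
      nlinarith [sq_nonneg (f s * p s - c), mul_le_mul_of_nonneg_right hfs (sq_nonneg (p s))]
  have h := hmono ⟨le_rfl, hab⟩ ⟨hab, le_rfl⟩ hab
  have hpb : 0 < p b := hpos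
  simp only [p, sub_self, mul_zero, sub_zero, one_pow, mul_one] at h
  rw [div_le_iff₀ hpos]
  nlinarith

theorem hasDerivAt_dotProduct_mulVec {𝕜 ι : Type*} [NontriviallyNormedField 𝕜] [Fintype ι]
    {M : 𝕜 → Matrix ι ι 𝕜} {M' : Matrix ι ι 𝕜} {s : 𝕜}
    (hM : ∀ i j, HasDerivAt (fun s => M s i j) (M' i j) s) (v w : ι → 𝕜) :
    HasDerivAt (fun s => v ⬝ᵥ (M s *ᵥ w)) (v ⬝ᵥ (M' *ᵥ w)) s := by
  simp only [dotProduct, mulVec]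
  exact .fun_sum fun i _ => (HasDerivAt.fun_sum fun j _ => (hM i j).mul_const (w j)).const_mul (v i)

theorem Matrix.trace_eq_sum_star_dotProduct_mulVec {𝕜 ι n : Type*} [RCLike 𝕜] [Fintype ι]
    [Fintype n] [DecidableEq n] (A : Matrix n n 𝕜)
    (b : OrthonormalBasis ι 𝕜 (EuclideanSpace 𝕜 n)) :
    A.trace = ∑ i, star ⇑(b i) ⬝ᵥ (A *ᵥ ⇑(b i)) := by
  rw [← trace_toLin_eq A (PiLp.basisFun 2 𝕜 n), ← toLpLin_eq_toLin,
    LinearMap.trace_eq_sum_inner _ b]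
  simp [EuclideanSpace.inner_eq_star_dotProduct, toLpLin_apply, dotProduct_comm]

theorem OrthonormalBasis.dotProduct_self {ι n : Type*} [Fintype ι] [Fintype n]
    (b : OrthonormalBasis ι ℝ (EuclideanSpace ℝ n)) (i : ι) : ⇑(b i) ⬝ᵥ ⇑(b i) = 1 := by
  simpa only [EuclideanSpace.inner_eq_star_dotProduct, star_trivial] using b.inner_eq_one i

theorem Matrix.IsHermitian.eigenvalues_eq_dotProduct {ι : Type*} [Fintype ι] [DecidableEq ι]
    {A : Matrix ι ι ℝ} (hA : A.IsHermitian) (i : ι) :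
    hA.eigenvalues i = ⇑(hA.eigenvectorBasis i) ⬝ᵥ (A *ᵥ ⇑(hA.eigenvectorBasis i)) := by
  simpa using hA.eigenvalues_eq i

theorem Matrix.IsSymm.sq_dotProduct_mulVec_le {R ι : Type*} [CommRing R] [LinearOrder R]
    [IsStrictOrderedRing R] [Fintype ι] {A : Matrix ι ι R} (hA : A.IsSymm) {v : ι → R}
    (hv : v ⬝ᵥ v = 1) :
    (v ⬝ᵥ (A *ᵥ v)) ^ 2 ≤ v ⬝ᵥ ((A * A) *ᵥ v) := by
  rw [← mulVec_mulVec, dotProduct_mulVec v A (A *ᵥ v), ← mulVec_transpose, hA.eq]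
  calc (v ⬝ᵥ (A *ᵥ v)) ^ 2 ≤ (v ⬝ᵥ v) * (A *ᵥ v ⬝ᵥ A *ᵥ v) := by
        simpa only [dotProduct, sq] using Finset.sum_mul_sq_le_sq_mul_sq _ v (A *ᵥ v)
    _ = A *ᵥ v ⬝ᵥ A *ᵥ v := by rw [hv, one_mul]

theorem Matrix.IsSymm.sq_dotProduct_mulVec_le_of_posSemidef_sub {ι : Type*} [Fintype ι]
    {A A' : Matrix ι ι ℝ} (hA : A.IsSymm) (hA' : (A' - A * A).PosSemidef) {v : ι → ℝ}
    (hv : v ⬝ᵥ v = 1) :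
    (v ⬝ᵥ (A *ᵥ v)) ^ 2 ≤ v ⬝ᵥ (A' *ᵥ v) := by
  have hquad : v ⬝ᵥ ((A * A) *ᵥ v) ≤ v ⬝ᵥ (A' *ᵥ v) := by
    simpa [sub_mulVec] using hA'.dotProduct_mulVec_nonneg v
  exact (hA.sq_dotProduct_mulVec_le hv).trans hquad

theorem matrix_diff_ineq_trace_bound_general
    {n : ℕ} (τ : ℝ)
    (M : ℝ → Matrix (Fin n) (Fin n) ℝ)
    (hsymm : ∀ t ∈ Set.Icc (0:ℝ) τ, (M t).IsSymm)
    (hdiff : ∀ t ∈ Set.Icc (0:ℝ) τ, ∀ i j : Fin n,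
      DifferentiableAt ℝ (fun s => M s i j) t)
    (hineq : ∀ t ∈ Set.Icc (0:ℝ) τ,
      ((Matrix.of fun i j => deriv (fun s => M s i j) t) - M t * M t).PosSemidef) :
    ∀ (h0 : (M 0).IsHermitian), ∀ t ∈ Set.Icc (0:ℝ) τ,
      (∀ i : Fin n, 0 < 1 - h0.eigenvalues i * t) →
        ∑ i, h0.eigenvalues i / (1 - h0.eigenvalues i * t) ≤ (M t).trace := by
  intro h0 t ht hpos
  rw [trace_eq_sum_star_dotProduct_mulVec (M t) h0.eigenvectorBasis]
  refine Finset.sum_le_sum fun i _ => ?_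
  set v := ⇑(h0.eigenvectorBasis i)
  have hsub : Icc 0 t ⊆ Icc 0 τ := Icc_subset_Icc_right ht.2
  have hderiv : ∀ s ∈ Icc 0 t, HasDerivAt (fun s => v ⬝ᵥ (M s *ᵥ v))
      (v ⬝ᵥ (of (fun j k => deriv (fun s => M s j k) s) *ᵥ v)) s := fun s hs =>
    hasDerivAt_dotProduct_mulVec (fun j k => (hdiff s (hsub hs) j k).hasDerivAt) v v
  have hriccati : ∀ s ∈ Icc 0 t, (v ⬝ᵥ (M s *ᵥ v)) ^ 2 ≤ v ⬝ᵥ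
      (of (fun j k => deriv (fun s => M s j k) s) *ᵥ v) := fun s hs =>
    (hsymm s (hsub hs)).sq_dotProduct_mulVec_le_of_posSemidef_sub (hineq s (hsub hs))
      (h0.eigenvectorBasis.dotProduct_self i)
  have h := riccati_comparison ht.1 hderiv hriccati (h0.eigenvalues_eq_dotProduct i).le
    (by simpa using hpos i)
  simpa [← h0.eigenvalues_eq_dotProduct i] using h

/-- Corollary: trace bound from a matrix differential inequality.
If `M : [0,τ] → Sym_n(ℝ)` is differentiable with `∂_t M(t) ⪰ M(t)²` on `[0,τ]`, and
`λ_1, …, λ_n` are the eigenvalues of `M(0)`, then for every `t ∈ [0,τ]` with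
`1 − λ_i t > 0` for all `i`, `Tr[M(t)] ≥ ∑ᵢ λ_i / (1 − λ_i t)`. -/
theorem matrix_diff_ineq_trace_bound
    {n : ℕ} (τ : ℝ) (hτ : 0 ≤ τ)
    (M : ℝ → Matrix (Fin n) (Fin n) ℝ)
    (hsymm : ∀ t ∈ Set.Icc (0:ℝ) τ, (M t).IsSymm)
    (hdiff : ∀ t ∈ Set.Icc (0:ℝ) τ, ∀ i j : Fin n,
      DifferentiableAt ℝ (fun s => M s i j) t)
    (hineq : ∀ t ∈ Set.Icc (0:ℝ) τ,
      ((Matrix.of fun i j => deriv (fun s => M s i j) t) - M t * M t).PosSemidef) :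
    ∀ (h0 : (M 0).IsHermitian), ∀ t ∈ Set.Icc (0:ℝ) τ,
      (∀ i : Fin n, 0 < 1 - h0.eigenvalues i * t) →
        ∑ i, h0.eigenvalues i / (1 - h0.eigenvalues i * t) ≤ (M t).trace :=
  matrix_diff_ineq_trace_bound_general τ M hsymm hdiff hineq
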